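/- For every natural number m ≥ 1 and every j ∈ {0, 1, …, m}, the j-th derivative of the function x ↦ cos(πx) − P_m(x) vanishes at x = 1/2 and at x = −1/2. -/

import Mathlib

open Real

/-- The summand `a_{j,k} = (-π²/4)^k / (2j+2k)! · C(j+k, j)`. -/
noncomputable def a (j k : ℕ) : ℝ :=
  (-(π ^ 2) / 4) ^ k / (Nat.factorial (2 * j + 2 * k)) * (Nat.choose (j + k) j)

/-- `t_j = Σ_{k=0}^∞ a_{j,k}`. -/
noncomputable def t (j : ℕ) : ℝ := ∑' k : ℕ, a j k

/-- `P_m(x) = Σ_{j=1}^m t_j π^{2j} (1/4 − x²)^j`. -/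
noncomputable def P (m : ℕ) (x : ℝ) : ℝ :=
  ∑ j ∈ Finset.Icc 1 m, t j * π ^ (2 * j) * (1 / 4 - x ^ 2) ^ j

/-!
Write `u = π²/4 - y²`. Expanding `(-y²)ⁿ = (u - π²/4)ⁿ` binomially in the cosine series and
regrouping the absolutely convergent double series by powers of `u` gives
`cos y = ∑ⱼ t_j uʲ`; at `y = π/2` this forces `t₀ = 0`. So at `y = πx` the polynomial `P_m` is
the truncation of this series, and `cos (πx) - P_m(x) = vᵐ⁺¹ G(v)` with `v = π²(1/4 - x²)` and
`G` entire. As `v` vanishes simply at `x = ±1/2`, the difference vanishes there to order `m + 1`.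
-/

open Finset

open scoped Nat NNReal

theorem HasSum.sum_antidiagonal {A α : Type*} [AddCommMonoid A] [HasAntidiagonal A]
    [AddCommMonoid α] [TopologicalSpace α] [ContinuousAdd α] [RegularSpace α]
    {f : A × A → α} {s : α} (hf : HasSum f s) :
    HasSum (fun n ↦ ∑ p ∈ antidiagonal n, f p) s := by
  refine (HasAntidiagonal.sigmaAntidiagonalEquivProd.hasSum_iff.mpr hf).sigma fun n ↦ ?_
  rw [← sum_finset_coe]
  exact hasSum_fintype _

section PowerSeries

variable {𝕜 : Type*} [NontriviallyNormedField 𝕜] [CompleteSpace 𝕜]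

theorem analyticAt_tsum_mul_pow {c : ℕ → 𝕜}
    (hc : ∀ r : ℝ≥0, Summable fun n ↦ ‖c n‖ * (r : ℝ) ^ n) (w : 𝕜) :
    AnalyticAt 𝕜 (fun w ↦ ∑' n, c n * w ^ n) w := by
  set p := FormalMultilinearSeries.ofScalars 𝕜 c
  have hp : p.radius = ⊤ :=
    p.radius_eq_top_of_summable_norm (by simpa [p, FormalMultilinearSeries.ofScalars_norm] using hc)
  have hsum := (p.hasFPowerSeriesOnBall (by simp [hp])).analyticAt_of_mem (y := w) (by simp [hp])
  simpa [p, ← FormalMultilinearSeries.ofScalarsSum.eq_def,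
    FormalMultilinearSeries.ofScalarsSum_eq_tsum] using hsum

theorem iteratedDeriv_eq_zero_of_eq_pow_sub_mul [CharZero 𝕜] {R R₁ : 𝕜 → 𝕜} {z₀ : 𝕜} {j n : ℕ}
    (hR₁ : ∀ z, AnalyticAt 𝕜 R₁ z) (hR : ∀ z, R z = (z - z₀) ^ n * R₁ z) (hj : j < n) :
    iteratedDeriv j R z₀ = 0 := by
  obtain ⟨t, rfl⟩ : ∃ t, n = j + (t + 1) := ⟨n - j - 1, by omega⟩
  obtain ⟨R₂, -, hR₂⟩ := iteratedDeriv_mul_pow_sub_of_analytic hR₁ hR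
  simp [hR₂]

end PowerSeries

theorem abs_a_le (j k : ℕ) : |a j k| ≤ (π ^ 2 / 4) ^ k / k ! / j ! := by
  have hfac : ((j + k).choose j : ℝ) * (j ! * k !) ≤ (2 * j + 2 * k)! := by
    rw [← mul_assoc, Nat.choose_symm_add]
    exact_mod_cast (Nat.add_choose_mul_factorial_mul_factorial j k).le.trans
      (Nat.factorial_le (by omega))
  rw [a, abs_mul, abs_div, abs_pow, abs_div, abs_neg, Nat.abs_cast, Nat.abs_cast,
    abs_of_nonneg (by positivity), abs_of_nonneg (by positivity)]
  rw [div_div, div_mul_eq_mul_div, div_le_div_iff₀ (by positivity) (by positivity)]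
  calc (π ^ 2 / 4) ^ k * ((j + k).choose j : ℝ) * (k ! * j !)
      = (π ^ 2 / 4) ^ k * (((j + k).choose j : ℝ) * (j ! * k !)) := by ring
    _ ≤ (π ^ 2 / 4) ^ k * (2 * j + 2 * k)! := by gcongr

theorem summable_abs_a_mul_pow (u : ℝ) :
    Summable fun p : ℕ × ℕ ↦ |a p.1 p.2 * u ^ p.1| := by
  refine Summable.of_nonneg_of_le (fun _ ↦ abs_nonneg _) (fun p ↦ ?_)
    ((Real.summable_pow_div_factorial |u|).mul_of_nonneg
      (Real.summable_pow_div_factorial (π ^ 2 / 4)) (fun _ ↦ by positivity) (fun _ ↦ by positivity))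
  rw [abs_mul, abs_pow]
  calc |a p.1 p.2| * |u| ^ p.1 ≤ (π ^ 2 / 4) ^ p.2 / p.2 ! / p.1 ! * |u| ^ p.1 := by
        gcongr; exact abs_a_le _ _
    _ = |u| ^ p.1 / p.1 ! * ((π ^ 2 / 4) ^ p.2 / p.2 !) := by ring

theorem summable_a (j : ℕ) : Summable (a j) := by
  simpa using ((summable_abs_a_mul_pow 1).prod_factor j).of_abs

theorem abs_t_le (j : ℕ) : |t j| ≤ exp (π ^ 2 / 4) / j ! := by
  have hexp : HasSum (fun k ↦ (π ^ 2 / 4) ^ k / k ! / j !) (exp (π ^ 2 / 4) / j !) := by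
    rw [Real.exp_eq_exp_ℝ]
    exact (NormedSpace.expSeries_div_hasSum_exp _).div_const _
  calc |t j| ≤ ∑' k, |a j k| := by
        simpa only [t, Real.norm_eq_abs] using norm_tsum_le_tsum_norm (summable_a j).norm
    _ ≤ exp (π ^ 2 / 4) / j ! := hasSum_le (abs_a_le j) (summable_a j).abs.hasSum hexp

theorem sum_antidiagonal_a_mul_pow (u : ℝ) (n : ℕ) :
    ∑ p ∈ antidiagonal n, a p.1 p.2 * u ^ p.1 = (u - π ^ 2 / 4) ^ n / (2 * n)! := by
  rw [sub_eq_add_neg, (Commute.all _ _).add_pow', sum_div]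
  refine sum_congr rfl fun p hp ↦ ?_
  rw [HasAntidiagonal.mem_antidiagonal] at hp
  subst hp
  rw [a, nsmul_eq_mul, neg_div, mul_add]
  ring

theorem hasSum_t_mul_pow (y : ℝ) : HasSum (fun j ↦ t j * (π ^ 2 / 4 - y ^ 2) ^ j) (cos y) := by
  set u := π ^ 2 / 4 - y ^ 2
  have hF := (summable_abs_a_mul_pow u).of_abs.hasSum
  have hcos : ∑' p : ℕ × ℕ, a p.1 p.2 * u ^ p.1 = cos y := by
    have h := hF.sum_antidiagonal
    simp only [sum_antidiagonal_a_mul_pow, show u - π ^ 2 / 4 = -1 * y ^ 2 by ring, mul_pow,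
      ← pow_mul] at h
    exact h.unique (Real.hasSum_cos y)
  rw [hcos] at hF
  exact hF.prod_fiberwise fun j ↦ (summable_a j).hasSum.mul_right _

theorem t_zero : t 0 = 0 := by
  have h := hasSum_t_mul_pow (π / 2)
  rw [show π ^ 2 / 4 - (π / 2) ^ 2 = 0 by ring, cos_pi_div_two] at h
  simpa using (h.unique (hasSum_single 0 fun j hj ↦ by simp [hj])).symm

noncomputable def cosRemainder (m : ℕ) (w : ℝ) : ℝ := ∑' n, t (n + (m + 1)) * w ^ n

theorem analyticAt_cosRemainder (m : ℕ) (w : ℝ) : AnalyticAt ℝ (cosRemainder m) w := by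
  refine analyticAt_tsum_mul_pow (fun r ↦ ?_) w
  refine Summable.of_nonneg_of_le (fun _ ↦ by positivity) (fun n ↦ ?_)
    ((Real.summable_pow_div_factorial r).mul_left (exp (π ^ 2 / 4)))
  calc ‖t (n + (m + 1))‖ * (r : ℝ) ^ n ≤ exp (π ^ 2 / 4) / (n + (m + 1))! * (r : ℝ) ^ n := by
        gcongr; exact abs_t_le _
    _ ≤ exp (π ^ 2 / 4) / n ! * (r : ℝ) ^ n := by
        gcongr; omega
    _ = exp (π ^ 2 / 4) * ((r : ℝ) ^ n / n !) := by ring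

theorem P_eq_sum_range (m : ℕ) (x : ℝ) :
    P m x = ∑ j ∈ range (m + 1), t j * (π ^ 2 * (1 / 4 - x ^ 2)) ^ j := by
  rw [range_eq_Ico, sum_eq_sum_Ico_succ_bot (by omega : 0 < m + 1), t_zero, zero_mul, zero_add,
    zero_add, Ico_add_one_right_eq_Icc, P]
  exact sum_congr rfl fun j _ ↦ by rw [mul_pow, pow_mul, mul_assoc]

theorem cos_sub_P_eq (m : ℕ) (x : ℝ) :
    cos (π * x) - P m x =
      (π ^ 2 * (1 / 4 - x ^ 2)) ^ (m + 1) * cosRemainder m (π ^ 2 * (1 / 4 - x ^ 2)) := by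
  set v := π ^ 2 * (1 / 4 - x ^ 2)
  have h := hasSum_t_mul_pow (π * x)
  rw [show π ^ 2 / 4 - (π * x) ^ 2 = v by ring, ← hasSum_nat_add_iff' (m + 1),
    ← P_eq_sum_range] at h
  rw [← h.tsum_eq, cosRemainder, ← tsum_mul_left]
  exact tsum_congr fun n ↦ by ring

theorem iteratedDeriv_delta_eq_zero_general (m : ℕ) (j : ℕ) (hj : j ≤ m) :
    iteratedDeriv j (fun x : ℝ => Real.cos (π * x) - P m x) (1 / 2) = 0 ∧
    iteratedDeriv j (fun x : ℝ => Real.cos (π * x) - P m x) (-(1 / 2)) = 0 := by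
  have hR := analyticAt_cosRemainder m
  constructor
  · refine iteratedDeriv_eq_zero_of_eq_pow_sub_mul (n := m + 1)
      (R₁ := fun x ↦ (-π ^ 2 * (x + 1 / 2)) ^ (m + 1) * cosRemainder m (π ^ 2 * (1 / 4 - x ^ 2)))
      (fun _ ↦ by fun_prop) (fun x ↦ ?_) (by omega)
    rw [cos_sub_P_eq, ← mul_assoc, ← mul_pow]
    ring
  · refine iteratedDeriv_eq_zero_of_eq_pow_sub_mul (n := m + 1)
      (R₁ := fun x ↦ (π ^ 2 * (1 / 2 - x)) ^ (m + 1) * cosRemainder m (π ^ 2 * (1 / 4 - x ^ 2)))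
      (fun _ ↦ by fun_prop) (fun x ↦ ?_) (by omega)
    rw [cos_sub_P_eq, ← mul_assoc, ← mul_pow]
    ring

/-- For `m ≥ 1` and `0 ≤ j ≤ m`, the `j`-th derivative of `x ↦ cos(πx) − P_m(x)`
vanishes at `x = 1/2` and at `x = −1/2`. -/
theorem iteratedDeriv_delta_eq_zero (m : ℕ) (hm : 1 ≤ m) (j : ℕ) (hj : j ≤ m) :
    iteratedDeriv j (fun x : ℝ => Real.cos (π * x) - P m x) (1 / 2) = 0 ∧
    iteratedDeriv j (fun x : ℝ => Real.cos (π * x) - P m x) (-(1 / 2)) = 0 :=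
  iteratedDeriv_delta_eq_zero_general m j hj
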